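/- Define Υ(x,y,a₂,a₃) = (x−y)^{1/3}·((2/21)x³ + (1/7)x²y + (3/7)xy² − a₃) on {(x,y,a₂,a₃) ∈ ℝ⁴ : x > y}. Then: (i) 3 ∂²Υ/∂x² + (2/(y−x)) ∂Υ/∂y + 2 ∂Υ/∂a₂ + 2x ∂Υ/∂a₃ = 0; and (ii) (x ∂/∂x + y ∂/∂y + 2a₂ ∂/∂a₂ + 3a₃ ∂/∂a₃)Υ = (10/3)Υ. -/

import Mathlib

/-!
Write `Υ = (x - y)^{1/3} (P(x, y) - a₃)` with `P` the cubic. Under the SLE operator, the terms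
in which the prefactor `(x - y)^{1/3}` is differentiated and multiplies `P - a₃` cancel between
`3 ∂ₓ²` and `(2 / (y - x)) ∂_y`; what is left is `(x - y)^{-2/3}` times
`2 (Pₓ - P_y) + (3 Pₓₓ - 2x)(x - y)`, and both summands equal `±(2/7)(x - y)(x - 3y)` for this `P`.
The `L₀` eigenvalue is Euler's identity for the quasi-homogeneous function `Υ` of degree
`1/3 + 3`, `a₃` having weight `3`.
-/

/-- The SLE₆(0) local martingale function
`Υ(x,y,a₂,a₃) = (x-y)^{1/3}((2/21)x³ + (1/7)x²y + (3/7)xy² - a₃)`. -/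
noncomputable def Υ13 (x y _a₂ a₃ : ℝ) : ℝ :=
  (x - y) ^ ((1 : ℝ) / 3)
    * (2 / 21 * x ^ 3 + 1 / 7 * x ^ 2 * y + 3 / 7 * x * y ^ 2 - a₃)

lemma hasDerivAt_sub_rpow_mul {y c t p' : ℝ} {p : ℝ → ℝ} (ht : t ≠ y) (hp : HasDerivAt p p' t) :
    HasDerivAt (fun s => (s - y) ^ c * p s)
      (c * (t - y) ^ (c - 1) * p t + (t - y) ^ c * p') t := by
  have hpow : HasDerivAt (fun s => (s - y) ^ c) (c * (t - y) ^ (c - 1)) t := by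
    simpa using ((hasDerivAt_id t).sub_const y).rpow_const (p := c) (Or.inl (sub_ne_zero.2 ht))
  exact hpow.fun_mul hp

lemma hasDerivAt_rpow_sub_mul {x c t p' : ℝ} {p : ℝ → ℝ} (ht : x ≠ t) (hp : HasDerivAt p p' t) :
    HasDerivAt (fun s => (x - s) ^ c * p s)
      (-(c * (x - t) ^ (c - 1)) * p t + (x - t) ^ c * p') t := by
  have hpow : HasDerivAt (fun s => (x - s) ^ c) (-(c * (x - t) ^ (c - 1))) t := by
    simpa using ((hasDerivAt_id t).const_sub x).rpow_const (p := c) (Or.inl (sub_ne_zero.2 ht))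
  exact hpow.fun_mul hp

lemma hasDerivAt_cubic_x (y a₃ t : ℝ) :
    HasDerivAt (fun s => 2 / 21 * s ^ 3 + 1 / 7 * s ^ 2 * y + 3 / 7 * s * y ^ 2 - a₃)
      (2 / 7 * t ^ 2 + 2 / 7 * t * y + 3 / 7 * y ^ 2) t := by
  refine (((((hasDerivAt_pow 3 t).const_mul (2 / 21 : ℝ)).add
    (((hasDerivAt_pow 2 t).const_mul (1 / 7 : ℝ)).mul_const y)).add
    (((hasDerivAt_id t).const_mul (3 / 7 : ℝ)).mul_const (y ^ 2))).sub_const a₃).congr_deriv ?_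
  push_cast; ring

lemma hasDerivAt_quadratic_x (y t : ℝ) :
    HasDerivAt (fun s => 2 / 7 * s ^ 2 + 2 / 7 * s * y + 3 / 7 * y ^ 2) (4 / 7 * t + 2 / 7 * y) t := by
  refine ((((hasDerivAt_pow 2 t).const_mul (2 / 7 : ℝ)).add
    (((hasDerivAt_id t).const_mul (2 / 7 : ℝ)).mul_const y)).add_const (3 / 7 * y ^ 2)).congr_deriv ?_
  push_cast; ring

lemma hasDerivAt_cubic_y (x a₃ t : ℝ) :
    HasDerivAt (fun s => 2 / 21 * x ^ 3 + 1 / 7 * x ^ 2 * s + 3 / 7 * x * s ^ 2 - a₃)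
      (1 / 7 * x ^ 2 + 6 / 7 * x * t) t := by
  refine (((((hasDerivAt_id t).const_mul (1 / 7 * x ^ 2)).const_add (2 / 21 * x ^ 3)).add
    ((hasDerivAt_pow 2 t).const_mul (3 / 7 * x))).sub_const a₃).congr_deriv ?_
  push_cast; ring

section

variable {x y : ℝ} (a₂ a₃ : ℝ)

lemma hasDerivAt_Υ13_x (h : x ≠ y) :
    HasDerivAt (fun s => Υ13 s y a₂ a₃)
      (1 / 3 * (x - y) ^ ((1 : ℝ) / 3 - 1)
          * (2 / 21 * x ^ 3 + 1 / 7 * x ^ 2 * y + 3 / 7 * x * y ^ 2 - a₃)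
        + (x - y) ^ ((1 : ℝ) / 3) * (2 / 7 * x ^ 2 + 2 / 7 * x * y + 3 / 7 * y ^ 2)) x :=
  hasDerivAt_sub_rpow_mul h (hasDerivAt_cubic_x y a₃ x)

lemma deriv_Υ13_x (h : x ≠ y) :
    deriv (fun s => Υ13 s y a₂ a₃) x = (x - y) ^ ((1 : ℝ) / 3)
      * ((2 / 21 * x ^ 3 + 1 / 7 * x ^ 2 * y + 3 / 7 * x * y ^ 2 - a₃) / (3 * (x - y))
        + (2 / 7 * x ^ 2 + 2 / 7 * x * y + 3 / 7 * y ^ 2)) := by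
  rw [(hasDerivAt_Υ13_x a₂ a₃ h).deriv, Real.rpow_sub_one (sub_ne_zero.2 h)]
  field_simp

lemma deriv_deriv_Υ13_x (h : x ≠ y) :
    deriv (fun x' => deriv (fun s => Υ13 s y a₂ a₃) x') x = (x - y) ^ ((1 : ℝ) / 3)
      * (-2 * (2 / 21 * x ^ 3 + 1 / 7 * x ^ 2 * y + 3 / 7 * x * y ^ 2 - a₃) / (9 * (x - y) ^ 2)
        + 2 * (2 / 7 * x ^ 2 + 2 / 7 * x * y + 3 / 7 * y ^ 2) / (3 * (x - y))
        + (4 / 7 * x + 2 / 7 * y)) := by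
  have hderiv : (fun x' => deriv (fun s => Υ13 s y a₂ a₃) x') =ᶠ[nhds x]
      fun t => (t - y) ^ ((1 : ℝ) / 3 - 1)
          * (1 / 3 * (2 / 21 * t ^ 3 + 1 / 7 * t ^ 2 * y + 3 / 7 * t * y ^ 2 - a₃))
        + (t - y) ^ ((1 : ℝ) / 3) * (2 / 7 * t ^ 2 + 2 / 7 * t * y + 3 / 7 * y ^ 2) := by
    filter_upwards [isOpen_ne.mem_nhds h] with t ht
    rw [(hasDerivAt_Υ13_x a₂ a₃ ht).deriv]; ring
  have hu : x - y ≠ 0 := sub_ne_zero.2 h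
  rw [hderiv.deriv_eq,
    ((hasDerivAt_sub_rpow_mul h ((hasDerivAt_cubic_x y a₃ x).const_mul _)).fun_add
      (hasDerivAt_sub_rpow_mul h (hasDerivAt_quadratic_x y x))).deriv]
  simp only [Real.rpow_sub_one hu]
  field_simp
  ring

lemma deriv_Υ13_y (h : x ≠ y) :
    deriv (fun s => Υ13 x s a₂ a₃) y = (x - y) ^ ((1 : ℝ) / 3)
      * (-(2 / 21 * x ^ 3 + 1 / 7 * x ^ 2 * y + 3 / 7 * x * y ^ 2 - a₃) / (3 * (x - y))
        + (1 / 7 * x ^ 2 + 6 / 7 * x * y)) := by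
  unfold Υ13
  rw [(hasDerivAt_rpow_sub_mul h (hasDerivAt_cubic_y x a₃ y)).deriv,
    Real.rpow_sub_one (sub_ne_zero.2 h)]
  field_simp

lemma deriv_Υ13_a₂ : deriv (fun s => Υ13 x y s a₃) a₂ = 0 := by
  simp [Υ13]

lemma deriv_Υ13_a₃ : deriv (fun s => Υ13 x y a₂ s) a₃ = -(x - y) ^ ((1 : ℝ) / 3) := by
  simp [Υ13]

end

/-- `Υ` is annihilated by the SLE₆(0) operator and has
`L₀`-eigenvalue `10/3`. -/
theorem stmt_13 :
    ∀ x y a₂ a₃ : ℝ, y < x →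
      (3 * deriv (fun x' => deriv (fun x'' => Υ13 x'' y a₂ a₃) x') x
          + 2 / (y - x) * deriv (fun y' => Υ13 x y' a₂ a₃) y
          + 2 * deriv (fun a₂' => Υ13 x y a₂' a₃) a₂
          + 2 * x * deriv (fun a₃' => Υ13 x y a₂ a₃') a₃ = 0)
      ∧ (x * deriv (fun x' => Υ13 x' y a₂ a₃) x + y * deriv (fun y' => Υ13 x y' a₂ a₃) y
          + 2 * a₂ * deriv (fun a₂' => Υ13 x y a₂' a₃) a₂
          + 3 * a₃ * deriv (fun a₃' => Υ13 x y a₂ a₃') a₃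
          = 10 / 3 * Υ13 x y a₂ a₃) := by
  intro x y a₂ a₃ h
  have hxy : x ≠ y := h.ne'
  have hu : x - y ≠ 0 := sub_ne_zero.2 hxy
  rw [deriv_deriv_Υ13_x a₂ a₃ hxy, deriv_Υ13_x a₂ a₃ hxy, deriv_Υ13_y a₂ a₃ hxy,
    deriv_Υ13_a₂, deriv_Υ13_a₃, Υ13]
  constructor
  · have hv : y - x ≠ 0 := sub_ne_zero.2 h.ne
    field_simp
    ring
  · field_simp
    ring
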